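/- arXiv:1512.04001 — 2 statements merged into one kernel-verified Lean document; each statement's English description precedes it below -/
import Mathlib

section
/- Let ⟨A, +, <, <_s, 0⟩ be a nontrivial s-hierarchical ordered group and let On(A) = {x ∈ A : R_s(x) = ∅}. Then: (i) any two elements of On(A) are comparable under <_s, and for x, y ∈ On(A), x <_s y if and only if x < y, so that On(A) is well-ordered by <; (ii) the order type of ⟨On(A), <⟩ is ω^φ for some nonzero ordinal φ (in particular, it is an infinite additively indecomposable ordinal); and (iii) for every x ∈ A there exists b ∈ On(A) with −b < x < b. -/
universe u

section Tree

variable {α : Type u}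

/-- The set of strict tree-predecessors of `x` under the relation `s`. -/
def treePred (s : α → α → Prop) (x : α) : Set α := {y | s y x}

/-- `⟨α, s⟩` is a tree: `s` is a strict partial order each of whose predecessor
sets is well-ordered by `s`. -/
structure IsTreeOrd (s : α → α → Prop) : Prop where
  irrefl : ∀ x, ¬ s x x
  trans : ∀ {x y z}, s x y → s y z → s x z
  predWO : ∀ x : α, IsWellOrder (treePred s x) fun a b => s a.1 b.1

/-- The tree-rank of `x`: the order type of its set of predecessors. -/
noncomputable def treeRank (s : α → α → Prop) (h : IsTreeOrd s) (x : α) : Ordinal :=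
  @Ordinal.type (treePred s x) (fun a b => s a.1 b.1) (h.predWO x)

/-- `y` is an immediate successor of `x`. -/
def IsImmSucc (s : α → α → Prop) (h : IsTreeOrd s) (x y : α) : Prop :=
  s x y ∧ treeRank s h y = treeRank s h x + 1

/-- `C` is a chain (a subclass totally ordered by `s`). -/
def IsTreeChain (s : α → α → Prop) (C : Set α) : Prop :=
  ∀ x ∈ C, ∀ y ∈ C, x ≠ y → s x y ∨ s y x

/-- `C` is a chain of limit length. -/
def IsLimitChain (s : α → α → Prop) (C : Set α) : Prop :=
  IsTreeChain s C ∧ ∃ hwo : IsWellOrder C fun a b => s a.1 b.1,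
    Order.IsSuccLimit (@Ordinal.type C (fun a b => s a.1 b.1) hwo)

/-- `y` is an immediate successor of the chain `C`. -/
def IsChainImmSucc (s : α → α → Prop) (h : IsTreeOrd s) (C : Set α) (y : α) : Prop :=
  (∀ x ∈ C, s x y) ∧
    IsLeast {o : Ordinal | ∀ x ∈ C, treeRank s h x < o} (treeRank s h y)

/-- `⟨α, s⟩` is a binary tree. -/
structure IsBinaryTree (s : α → α → Prop) : Prop where
  toIsTreeOrd : IsTreeOrd s
  succ_binary : ∀ x a b c : α, IsImmSucc s toIsTreeOrd x a → IsImmSucc s toIsTreeOrd x b →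
    IsImmSucc s toIsTreeOrd x c → a = b ∨ a = c ∨ b = c
  chain_succ_unique : ∀ C : Set α, IsLimitChain s C → ∀ y z : α,
    IsChainImmSucc s toIsTreeOrd C y → IsChainImmSucc s toIsTreeOrd C z → y = z

variable [LinearOrder α]

/-- `L_s(x)`: the predecessors of `x` lying below `x`. -/
def Lopts (s : α → α → Prop) (x : α) : Set α := {a | s a x ∧ a < x}

/-- `R_s(x)`: the predecessors of `x` lying above `x`. -/
def Ropts (s : α → α → Prop) (x : α) : Set α := {a | s a x ∧ x < a}

/-- `⟨α, <, s⟩` is a lexicographically ordered binary tree. -/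
structure IsLexBinTree (s : α → α → Prop) : Prop where
  toIsBinaryTree : IsBinaryTree s
  lex : ∀ x y : α, x ≠ y →
    ((¬ s x y ∧ ¬ s y x) ↔ ∃ z, s z x ∧ s z y ∧ (x < z ∧ z < y ∨ y < z ∧ z < x))

/-- `x = {L | R}`: `x` is the simplest element lying between `L` and `R`. -/
def IsSimplest (s : α → α → Prop) (L R : Set α) (x : α) : Prop :=
  (∀ l ∈ L, l < x) ∧ (∀ r ∈ R, x < r) ∧
    ∀ y, y ≠ x → (∀ l ∈ L, l < y) → (∀ r ∈ R, y < r) → s x y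

/-- `B` is an initial subtree: it is closed under `s`-predecessors. -/
def IsInitialSubtree (s : α → α → Prop) (B : Set α) : Prop :=
  ∀ x ∈ B, ∀ y, s y x → y ∈ B

end Tree

/-- s-hierarchical ordered group. -/
structure IsSHGroup (α : Type u) [AddCommGroup α] [LinearOrder α] [IsOrderedAddMonoid α] (s : α → α → Prop) : Prop where
  lexBin : IsLexBinTree s
  add_eq : ∀ x y : α, IsSimplest s
    ({z | ∃ x' ∈ Lopts s x, z = x' + y} ∪ {z | ∃ y' ∈ Lopts s y, z = x + y'})
    ({z | ∃ x'' ∈ Ropts s x, z = x'' + y} ∪ {z | ∃ y'' ∈ Ropts s y, z = x + y''})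
    (x + y)

/-- s-hierarchical ordered domain. -/
structure IsSHDomain (α : Type u) [CommRing α] [LinearOrder α] [IsStrictOrderedRing α] (s : α → α → Prop) : Prop where
  toIsSHGroup : IsSHGroup α s
  mul_eq : ∀ x y : α, IsSimplest s
    ({z | ∃ x' ∈ Lopts s x, ∃ y' ∈ Lopts s y, z = x' * y + x * y' - x' * y'} ∪
     {z | ∃ x'' ∈ Ropts s x, ∃ y'' ∈ Ropts s y, z = x'' * y + x * y'' - x'' * y''})
    ({z | ∃ x' ∈ Lopts s x, ∃ y'' ∈ Ropts s y, z = x' * y + x * y'' - x' * y''} ∪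
     {z | ∃ x'' ∈ Ropts s x, ∃ y' ∈ Lopts s y, z = x'' * y + x * y' - x'' * y'})
    (x * y)

/-- s-hierarchical ordered field. -/
def IsSHField (α : Type u) [Field α] [LinearOrder α] [IsStrictOrderedRing α] (s : α → α → Prop) : Prop :=
  IsSHDomain α s

section Hahn

variable {Γ : Type*} [LinearOrder Γ]

/-- The series `r·t^y` in `ℝ((t^Γ))` (represented with exponents in `Γᵒᵈ`, so that
supports are well-ordered under the reverse order `>` of `Γ`). -/
noncomputable def tpow (y : Γ) (r : ℝ) : HahnSeries Γᵒᵈ ℝ :=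
  HahnSeries.single (OrderDual.toDual y) r

/-- Truncation of a Hahn series at `γ`: keep exactly the coefficients at exponents `> γ`. -/
noncomputable def htrunc (x : HahnSeries Γᵒᵈ ℝ) (γ : Γ) : HahnSeries Γᵒᵈ ℝ where
  coeff g := if γ < OrderDual.ofDual g then x.coeff g else 0
  isPWO_support' := x.isPWO_support.mono (by
    intro g hg
    simp only [Function.mem_support] at hg ⊢
    intro h
    simp [h] at hg)

/-- The leading coefficient of a Hahn series: its coefficient at the greatest
element of its support (`0` for the zero series). -/
noncomputable def leadCoeff (x : HahnSeries Γᵒᵈ ℝ) : ℝ :=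
  letI := Classical.dec (x = 0)
  if h : x = 0 then 0
  else x.coeff (x.isWF_support.min (HahnSeries.support_nonempty_iff.2 h))

/-- A Hahn series is positive iff its leading coefficient is positive. -/
def HahnPos (x : HahnSeries Γᵒᵈ ℝ) : Prop := x ≠ 0 ∧ 0 < leadCoeff x

/-- The order type of the support of a Hahn series, well-ordered by the reverse
order of `Γ`. -/
noncomputable def suppOrderType (x : HahnSeries Γᵒᵈ ℝ) : Ordinal :=
  @Ordinal.type x.support (fun a b => (a : Γᵒᵈ) < (b : Γᵒᵈ))
    { trichotomous := fun a b hab hba => by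
        rcases lt_trichotomy (a : Γᵒᵈ) (b : Γᵒᵈ) with h | h | h
        · exact absurd h hab
        · exact Subtype.ext h
        · exact absurd h hba
      wf := x.isWF_support }

end Hahn

/-- The set of dyadic rational real numbers. -/
def Dyadics : Set ℝ := {x | ∃ (z : ℤ) (m : ℕ), x = z / 2 ^ m}

/-- `H` is an initial subgroup of `ℝ`: it is `{0}`, or `{z/2^m : z ∈ ℤ}` for some `m`,
or it contains all dyadic rationals. -/
def IsInitialRealSubgroup (H : Set ℝ) : Prop :=
  H = {0} ∨ (∃ m : ℕ, H = {x : ℝ | ∃ z : ℤ, x = (z : ℝ) / 2 ^ m}) ∨ Dyadics ⊆ H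

section StmtAux

open Ordinal

variable {A : Type u} [AddCommGroup A] [LinearOrder A] [IsOrderedAddMonoid A] {s : A → A → Prop}

namespace IsSHGroup

variable (h : IsSHGroup A s)
include h

lemma strans {x y z : A} (hxy : s x y) (hyz : s y z) : s x z :=
  h.lexBin.toIsBinaryTree.toIsTreeOrd.trans hxy hyz

lemma sirrefl (x : A) : ¬ s x x := h.lexBin.toIsBinaryTree.toIsTreeOrd.irrefl x

lemma sasymm {x y : A} (hxy : s x y) (hyx : s y x) : False :=
  h.sirrefl x (h.strans hxy hyx)

lemma swf : WellFounded s := by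
  constructor
  intro x
  have key : ∀ b : treePred s x, Acc s b.1 := by
    intro b
    refine (h.lexBin.toIsBinaryTree.toIsTreeOrd.predWO x).wf.induction
      (C := fun b => Acc s b.1) b ?_
    intro c IH
    exact Acc.intro c.1 fun d hd => IH ⟨d, h.strans hd c.2⟩ hd
  exact Acc.intro x fun c hc => key ⟨c, hc⟩

lemma exists_root_pred (x : A) (hne : (treePred s x).Nonempty) :
    ∃ r, s r x ∧ ∀ w, ¬ s w r := by
  obtain ⟨z, hz⟩ := hne
  refine ⟨h.swf.min (treePred s x) ⟨z, hz⟩, h.swf.min_mem (treePred s x) ⟨z, hz⟩, ?_⟩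
  intro w hw
  exact h.swf.not_lt_min (treePred s x)
    (h.strans hw (h.swf.min_mem (treePred s x) ⟨z, hz⟩)) hw

lemma root_add (r : A) (hr : ∀ w, ¬ s w r) : ∀ y, y ≠ r + r → s (r + r) y := by
  intro y hy
  refine (h.add_eq r r).2.2 y hy ?_ ?_
  · rintro l (⟨x', hx', _⟩ | ⟨y', hy', _⟩)
    · exact (hr x' hx'.1).elim
    · exact (hr y' hy'.1).elim
  · rintro l (⟨x', hx', _⟩ | ⟨y', hy', _⟩)
    · exact (hr x' hx'.1).elim
    · exact (hr y' hy'.1).elim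

lemma treePred_zero : ∀ w, ¬ s w (0 : A) := by
  intro z hz
  obtain ⟨r, hrx, hr⟩ := h.exists_root_pred 0 ⟨z, hz⟩
  by_cases he : r + r = r
  · have hr0 : r = 0 := add_right_cancel (he.trans (zero_add r).symm)
    exact h.sirrefl 0 (hr0 ▸ hrx)
  · exact hr _ (h.root_add r hr r fun e => he e.symm)

lemma s_zero {x : A} (hx : x ≠ 0) : s 0 x := by
  by_cases hp : (treePred s x).Nonempty
  · obtain ⟨r, hrx, hr⟩ := h.exists_root_pred x hp
    rcases eq_or_ne r 0 with rfl | hr0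
    · exact hrx
    · obtain ⟨z, hz, -⟩ := (h.lexBin.lex r 0 hr0).mp
        ⟨fun hc => h.treePred_zero r hc, fun hc => hr 0 hc⟩
      exact (hr z hz).elim
  · have hxroot : ∀ w, ¬ s w x := fun w hw => hp ⟨w, hw⟩
    obtain ⟨z, hz, -⟩ := (h.lexBin.lex x 0 hx).mp
      ⟨fun hc => h.treePred_zero x hc, fun hc => hxroot 0 hc⟩
    exact (hxroot z hz).elim

lemma noR {x : A} (hx : Ropts s x = ∅) {w : A} (hw : s w x) : w < x := by
  rcases lt_trichotomy w x with h1 | rfl | h1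
  · exact h1
  · exact (h.sirrefl _ hw).elim
  · exact absurd (show w ∈ Ropts s x from ⟨hw, h1⟩) (by simp [hx])

lemma on_comp {x y : A} (hx : Ropts s x = ∅) (hy : Ropts s y = ∅) (hxy : x ≠ y) :
    s x y ∨ s y x := by
  by_contra hc
  push_neg at hc
  obtain ⟨z, hzx, hzy, hb⟩ := (h.lexBin.lex x y hxy).mp ⟨hc.1, hc.2⟩
  rcases hb with ⟨h1, -⟩ | ⟨h2, -⟩
  · exact absurd (h.noR hx hzx) (not_lt.2 h1.le)
  · exact absurd (h.noR hy hzy) (not_lt.2 h2.le)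

lemma on_s_iff_lt {x y : A} (hx : Ropts s x = ∅) (hy : Ropts s y = ∅) :
    s x y ↔ x < y := by
  constructor
  · exact fun hs => h.noR hy hs
  · intro hlt
    rcases h.on_comp hx hy hlt.ne with h1 | h1
    · exact h1
    · exact absurd (h.noR hx h1) (not_lt.2 hlt.le)

lemma on_zero : Ropts s (0 : A) = ∅ :=
  Set.eq_empty_iff_forall_notMem.2 fun w hw => h.treePred_zero w hw.1

lemma on_nonneg {x : A} (hx : Ropts s x = ∅) : 0 ≤ x := by
  rcases eq_or_ne x 0 with rfl | hne
  · exact le_refl 0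
  · exact (h.noR hx (h.s_zero hne)).le

lemma on_add {x y : A} (hx : Ropts s x = ∅) (hy : Ropts s y = ∅) :
    Ropts s (x + y) = ∅ := by
  rw [Set.eq_empty_iff_forall_notMem]
  rintro w ⟨hws, hlt⟩
  have hsw : s (x + y) w := by
    refine (h.add_eq x y).2.2 w (ne_of_gt hlt) ?_ ?_
    · rintro l (⟨x', hx', rfl⟩ | ⟨y', hy', rfl⟩)
      · exact lt_trans (add_lt_add_left hx'.2 y) hlt
      · exact lt_trans (add_lt_add_right hy'.2 x) hlt
    · rintro l (⟨x'', hx'', _⟩ | ⟨y'', hy'', _⟩)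
      · exact absurd hx'' (by simp [hx])
      · exact absurd hy'' (by simp [hy])
  exact (h.sasymm hws hsw).elim

lemma on_bound (x : A) : ∃ b, Ropts s b = ∅ ∧ x ≤ b := by
  refine h.swf.induction (C := fun x => ∃ b, Ropts s b = ∅ ∧ x ≤ b) x ?_
  intro x IH
  rcases eq_or_ne (Ropts s x) ∅ with he | hne
  · exact ⟨x, he, le_refl x⟩
  · obtain ⟨w, hw⟩ := Set.nonempty_iff_ne_empty.2 hne
    obtain ⟨b, hb, hwb⟩ := IH w hw.1
    exact ⟨b, hb, (lt_of_lt_of_le hw.2 hwb).le⟩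

lemma on_pos [Nontrivial A] : ∃ c : A, Ropts s c = ∅ ∧ 0 < c := by
  obtain ⟨a, ha⟩ := exists_ne (0 : A)
  obtain ⟨b1, hb1, h1⟩ := h.on_bound a
  obtain ⟨b2, hb2, h2⟩ := h.on_bound (-a)
  refine ⟨b1 + b2, h.on_add hb1 hb2, ?_⟩
  have n1 := h.on_nonneg hb1
  have n2 := h.on_nonneg hb2
  rcases lt_or_gt_of_ne ha with hc | hc
  · exact add_pos_of_nonneg_of_pos n1 (lt_of_lt_of_le (neg_pos.2 hc) h2)
  · exact add_pos_of_pos_of_nonneg (lt_of_lt_of_le hc h1) n2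

end IsSHGroup

end StmtAux
/-- Properties of the class `On(A)` of "ordinals" (elements with no right predecessors)
of a nontrivial s-hierarchical ordered group: it is a chain under `<_s` on which `<_s`
and `<` agree (hence it is well-ordered by `<`), its order type is `ω^φ` for some
nonzero ordinal `φ`, and it is cofinal in `A` in the sense that every element of `A`
lies between `-b` and `b` for some `b ∈ On(A)`. -/
theorem stmt15 {A : Type u} [AddCommGroup A] [LinearOrder A] [IsOrderedAddMonoid A] [Nontrivial A]
    (s : A → A → Prop) (h : IsSHGroup A s) :
    (∀ x ∈ {x : A | Ropts s x = ∅}, ∀ y ∈ {x : A | Ropts s x = ∅}, x ≠ y → s x y ∨ s y x) ∧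
    (∀ x ∈ {x : A | Ropts s x = ∅}, ∀ y ∈ {x : A | Ropts s x = ∅}, (s x y ↔ x < y)) ∧
    (∃ hwo : IsWellOrder {x : A | Ropts s x = ∅} (fun a b => (a : A) < (b : A)),
      ∃ φ : Ordinal, φ ≠ 0 ∧
        @Ordinal.type {x : A | Ropts s x = ∅} (fun a b => (a : A) < (b : A)) hwo =
          Ordinal.omega0 ^ φ) ∧
    ∀ x : A, ∃ b ∈ {x : A | Ropts s x = ∅}, -b < x ∧ x < b := by
  
  classical
  refine ⟨fun x hx y hy hxy => h.on_comp hx hy hxy,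
    fun x hx y hy => h.on_s_iff_lt hx hy, ?_, ?_⟩
  · letI inst : IsWellOrder {x : A | Ropts s x = ∅} (fun a b => (a : A) < (b : A)) :=
      { trichotomous := fun a b hab hba => by
          rcases lt_trichotomy (a : A) (b : A) with h1 | h1 | h1
          exacts [absurd h1 hab, Subtype.ext h1, absurd h1 hba]
        wf := Subrelation.wf
          (fun {a b} hab => (h.on_s_iff_lt a.2 b.2).mpr hab)
          (InvImage.wf Subtype.val h.swf) }
    have key : ∀ X Y : {x : A | Ropts s x = ∅},
        Ordinal.typein (fun a b : {x : A | Ropts s x = ∅} => (a : A) < (b : A)) X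
          + Ordinal.typein (fun a b : {x : A | Ropts s x = ∅} => (a : A) < (b : A)) Y
          ≤ Ordinal.typein (fun a b : {x : A | Ropts s x = ∅} => (a : A) < (b : A))
            ⟨(X : A) + (Y : A), h.on_add X.2 Y.2⟩ := by
      intro X Y
      rw [← Ordinal.type_subrel, ← Ordinal.type_subrel, ← Ordinal.type_subrel,
        ← Ordinal.type_sum_lex]
      refine Ordinal.type_le_iff'.2 ⟨RelEmbedding.ofMonotone (fun p => Sum.rec
        (fun c => ⟨c.1, lt_of_lt_of_le c.2 (le_add_of_nonneg_right (h.on_nonneg Y.2))⟩)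
        (fun d => ⟨⟨(X : A) + (d.1 : A), h.on_add X.2 d.1.2⟩, add_lt_add_right d.2 (X : A)⟩) p)
        ?_⟩
      intro a b hab
      cases hab with
      | inl h1 => exact h1
      | inr h1 => exact add_lt_add_right h1 (X : A)
      | sep c d => exact lt_of_lt_of_le c.2 (le_add_of_nonneg_right (h.on_nonneg d.1.2))
    have hprin : Ordinal.Principal (· + ·)
        (Ordinal.type (fun a b : {x : A | Ropts s x = ∅} => (a : A) < (b : A))) := by
      intro a b ha hb
      obtain ⟨X, rfl⟩ := Ordinal.typein_surj _ ha
      obtain ⟨Y, rfl⟩ := Ordinal.typein_surj _ hb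
      exact lt_of_le_of_lt (key X Y) (Ordinal.typein_lt_type _ _)
    have hne0 : Ordinal.type (fun a b : {x : A | Ropts s x = ∅} => (a : A) < (b : A)) ≠ 0 :=
      Ordinal.type_ne_zero_iff_nonempty.2 ⟨⟨0, h.on_zero⟩⟩
    rcases Ordinal.principal_add_iff_zero_or_omega0_opow.mp hprin with h0 | ⟨φ, hφ⟩
    · exact absurd h0 hne0
    · refine ⟨inst, φ, ?_, hφ.symm⟩
      rintro rfl
      simp only [Ordinal.opow_zero] at hφ
      obtain ⟨c, hc, hcpos⟩ := h.on_pos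
      have h2 := Ordinal.typein_lt_type
        (fun a b : {x : A | Ropts s x = ∅} => (a : A) < (b : A)) ⟨c, hc⟩
      have h3 : (1 : Ordinal) ≤ Ordinal.typein
          (fun a b : {x : A | Ropts s x = ∅} => (a : A) < (b : A)) ⟨c, hc⟩ :=
        Order.one_le_iff_pos.2 (lt_of_le_of_lt (zero_le)
          ((Ordinal.typein_lt_typein _).2
            (show ((⟨0, h.on_zero⟩ : {x : A | Ropts s x = ∅}) : A) < c from hcpos)))
      exact absurd hφ (ne_of_lt (lt_of_le_of_lt h3 h2))
  · intro x
    obtain ⟨b1, hb1, h1⟩ := h.on_bound x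
    obtain ⟨b2, hb2, h2⟩ := h.on_bound (-x)
    obtain ⟨c, hc, hcpos⟩ := h.on_pos
    have n1 := h.on_nonneg hb1
    have n2 := h.on_nonneg hb2
    refine ⟨b1 + b2 + c, h.on_add (h.on_add hb1 hb2) hc, ?_, ?_⟩
    · have hx : -b2 ≤ x := neg_le.mp h2
      have hb : b2 < b1 + b2 + c :=
        lt_of_le_of_lt (le_add_of_nonneg_left n1) (lt_add_of_pos_right _ hcpos)
      exact lt_of_lt_of_le (neg_lt_neg hb) hx
    · exact lt_of_le_of_lt (le_trans h1 (le_add_of_nonneg_right n2))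
        (lt_add_of_pos_right _ hcpos)
end

section
/- Let p be a prime number greater than 2 and let A = ℤ[1/p] = {a/p^k : a ∈ ℤ, k ∈ ℕ}, regarded as an ordered abelian group under addition with the order inherited from ℚ (the p-divisible ordered abelian group generated by 1). Then A does not admit an s-hierarchical ordered group structure; that is, there is no partial order <_s on A making ⟨A, +, <, <_s, 0⟩ an s-hierarchical ordered group. -/
universe u

/-- The ordered additive group `ℤ[1/p] = {a / p^k : a ∈ ℤ, k ∈ ℕ} ⊆ ℚ`. -/
def zInvP (p : ℕ) (hp : p ≠ 0) : AddSubgroup ℚ where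
  carrier := {q : ℚ | ∃ (a : ℤ) (k : ℕ), q = (a : ℚ) / (p : ℚ) ^ k}
  zero_mem' := ⟨0, 0, by norm_num⟩
  add_mem' := by
    rintro q r ⟨a, k, rfl⟩ ⟨b, m, rfl⟩
    refine ⟨a * (p : ℤ) ^ m + b * (p : ℤ) ^ k, k + m, ?_⟩
    have hp' : ((p : ℚ)) ≠ 0 := Nat.cast_ne_zero.mpr hp
    rw [div_add_div _ _ (pow_ne_zero k hp') (pow_ne_zero m hp')]
    push_cast
    rw [pow_add]
    ring
  neg_mem' := by
    rintro q ⟨a, k, rfl⟩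
    exact ⟨-a, k, by push_cast; ring⟩

section AuxSH

variable {A : Type*} [AddCommGroup A] [LinearOrder A] [IsOrderedAddMonoid A] {s : A → A → Prop}

/-- In any tree order, inside any set `T`, below any `x ∈ T` there is an element of `T`
all of whose tree-predecessors avoid `T`. -/
lemma exmin_aux (hts : IsTreeOrd s) (x : A) (T : Set A) (hx : x ∈ T) :
    ∃ d ∈ T, ∀ z, s z d → z ∉ T := by
  classical
  by_cases hne : {z : treePred s x | z.1 ∈ T}.Nonempty
  · have wf := (hts.predWO x).toIsWellFounded.wf
    refine ⟨(wf.min _ hne).1, wf.min_mem _ hne, fun z hz hzT => ?_⟩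
    have hzx : s z x := hts.trans hz (wf.min _ hne).2
    exact wf.not_lt_min _ (show (⟨z, hzx⟩ : treePred s x) ∈ _ from hzT) hz
  · exact ⟨x, hx, fun z hz hzT => hne ⟨⟨z, hz⟩, hzT⟩⟩

/-- `0` is the root: it is `s`-below every other element. -/
lemma root_s_aux (h : IsSHGroup A s) : ∀ y : A, y ≠ 0 → s 0 y := by
  have hts := h.lexBin.toIsBinaryTree.toIsTreeOrd
  obtain ⟨r, -, hr⟩ := exmin_aux hts (0 : A) Set.univ trivial
  have hr' : ∀ z, ¬ s z r := fun z hz => hr z hz trivial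
  have keygen : ∀ c : A, (∀ z, ¬ s z c) → ∀ y, y ≠ c + c → s (c + c) y := by
    intro c hc y hy
    refine (h.add_eq c c).2.2 y hy ?_ ?_
    · rintro l (⟨x', hx', rfl⟩ | ⟨x', hx', rfl⟩) <;> exact absurd hx'.1 (hc x')
    · rintro l (⟨x', hx', rfl⟩ | ⟨x', hx', rfl⟩) <;> exact absurd hx'.1 (hc x')
  have key1 := keygen r hr'
  set m := r + r with hm
  have hmpr : ∀ z, ¬ s z m := by
    intro z hz
    have hne : z ≠ m := fun e => hts.irrefl m (e ▸ hz)
    exact hts.irrefl z (hts.trans hz (key1 z hne))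
  have key2 := keygen m hmpr
  have hmm : m + m = m := by
    by_contra hne
    exact hts.irrefl m (hts.trans (key1 (m + m) (Ne.symm (fun e => hne e.symm)))
      (key2 m (Ne.symm hne)))
  have hm0 : m = 0 := add_eq_right.mp hmm
  intro y hy
  have := key2 y (by rw [hmm, hm0]; exact hy)
  rwa [hmm, hm0] at this

/-- A nonzero tree-predecessor of a positive element is positive. -/
lemma pred_pos_aux (h : IsSHGroup A s) {x z : A} (hx : 0 < x) (hz : s z x) (hz0 : z ≠ 0) :
    0 < z := by
  rcases hz0.lt_or_gt with hneg | hpos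
  · exfalso
    have hxy : x ≠ z := (hneg.trans hx).ne'
    have hinc := (h.lexBin.lex x z hxy).mpr
      ⟨0, root_s_aux h x hx.ne', root_s_aux h z hz0, Or.inr ⟨hneg, hx⟩⟩
    exact hinc.2 hz
  · exact hpos

/-- Base case: below any positive element there is a positive element all of whose
predecessors are `0`. -/
lemma invp_base_aux (h : IsSHGroup A s) {e : A} (he : 0 < e) :
    ∃ d : A, 0 < d ∧ ∀ z, s z d → z = 0 ∨ (0 < z ∧ d + d ≤ z) := by
  obtain ⟨d, hdT, hdmin⟩ :=
    exmin_aux h.lexBin.toIsBinaryTree.toIsTreeOrd e {z | 0 < z} he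
  refine ⟨d, hdT, fun z hz => ?_⟩
  by_cases hz0 : z = 0
  · exact Or.inl hz0
  · exact absurd (pred_pos_aux h hdT hz hz0) (hdmin z hz)

/-- Step: any element satisfying the invariant is twice an element satisfying it. -/
lemma invp_step_aux (h : IsSHGroup A s) {d : A}
    (hd : 0 < d ∧ ∀ z, s z d → z = 0 ∨ (0 < z ∧ d + d ≤ z))
    {y : A} (hy1 : 0 < y) (hy2 : y < d) :
    ∃ d' : A, (0 < d' ∧ ∀ z, s z d' → z = 0 ∨ (0 < z ∧ d' + d' ≤ z)) ∧ d' + d' = d := by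
  obtain ⟨d', hd'T, hd'min⟩ :=
    exmin_aux h.lexBin.toIsBinaryTree.toIsTreeOrd y {z | 0 < z ∧ z < d} ⟨hy1, hy2⟩
  obtain ⟨hd'0, hd'd⟩ := hd'T
  have hpred : ∀ z, s z d' → z = 0 ∨ d ≤ z := by
    intro z hz
    by_cases hz0 : z = 0
    · exact Or.inl hz0
    · exact Or.inr (le_of_not_gt fun h' =>
        hd'min z hz ⟨pred_pos_aux h hd'0 hz hz0, h'⟩)
  have heq : d' + d' = d := by
    by_contra hne
    have key : s (d' + d') d := by
      refine (h.add_eq d' d').2.2 d (fun e => hne e.symm) ?_ ?_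
      · rintro l (⟨x', hx', rfl⟩ | ⟨x', hx', rfl⟩) <;>
          rcases hpred x' hx'.1 with hx0 | hxd
        · simpa [hx0] using hd'd
        · exact absurd hxd (not_le.mpr (hx'.2.trans hd'd))
        · simpa [hx0] using hd'd
        · exact absurd hxd (not_le.mpr (hx'.2.trans hd'd))
      · rintro r (⟨x'', hx'', rfl⟩ | ⟨x'', hx'', rfl⟩) <;>
          rcases hpred x'' hx''.1 with h0 | hdx
        · exact absurd h0 (hd'0.trans hx''.2).ne'
        · exact lt_of_lt_of_le (lt_add_of_pos_right d hd'0) (add_le_add_left hdx d')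
        · exact absurd h0 (hd'0.trans hx''.2).ne'
        · rw [add_comm]
          exact lt_of_lt_of_le (lt_add_of_pos_right d hd'0) (add_le_add_left hdx d')
    obtain h0 | ⟨-, hge⟩ := hd.2 _ key
    · exact absurd h0 (add_pos hd'0 hd'0).ne'
    · exact absurd hge (not_le.mpr (add_lt_add hd'd hd'd))
  refine ⟨d', ⟨hd'0, fun z hz => ?_⟩, heq⟩
  rcases hpred z hz with h0 | hdz
  · exact Or.inl h0
  · exact Or.inr ⟨hd.1.trans_le hdz, by rw [heq]; exact hdz⟩

end AuxSH

/-- For a prime `p > 2`, the `p`-divisible ordered abelian group `ℤ[1/p]` generated by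
`1` admits no s-hierarchical ordered group structure. -/
theorem stmt18 (p : ℕ) (hp : p.Prime) (hp2 : 2 < p) :
    ¬ ∃ s : zInvP p hp.ne_zero → zInvP p hp.ne_zero → Prop,
        IsSHGroup (zInvP p hp.ne_zero) s := by
  rintro ⟨s, h⟩
  have hpQ : ((p : ℚ)) ≠ 0 := Nat.cast_ne_zero.mpr hp.ne_zero
  have hone_mem : (1 : ℚ) ∈ zInvP p hp.ne_zero := ⟨1, 0, by norm_num⟩
  have hone_pos : 0 < (⟨1, hone_mem⟩ : zInvP p hp.ne_zero) := by
    have : (0 : ℚ) < ((⟨1, hone_mem⟩ : zInvP p hp.ne_zero) : ℚ) := by norm_num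
    exact_mod_cast this
  have hbase := invp_base_aux h hone_pos
  have hstep : ∀ d : zInvP p hp.ne_zero,
      (0 < d ∧ ∀ z, s z d → z = 0 ∨ (0 < z ∧ d + d ≤ z)) →
      ∃ d' : zInvP p hp.ne_zero,
        (0 < d' ∧ ∀ z, s z d' → z = 0 ∨ (0 < z ∧ d' + d' ≤ z)) ∧ d' + d' = d := by
    intro d hd
    have hd0Q : (0 : ℚ) < (d : ℚ) := by exact_mod_cast hd.1
    obtain ⟨a, k, hak⟩ := d.2
    have hymem : ((d : ℚ) / p) ∈ zInvP p hp.ne_zero := by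
      refine ⟨a, k + 1, ?_⟩
      rw [hak, pow_succ, ← div_div]
    have hp1 : (1 : ℚ) < (p : ℚ) := by exact_mod_cast hp.one_lt
    have hy1 : 0 < (⟨(d : ℚ) / p, hymem⟩ : zInvP p hp.ne_zero) := by
      have : (0 : ℚ) < (d : ℚ) / p := div_pos hd0Q (by positivity)
      exact_mod_cast this
    have hy2 : (⟨(d : ℚ) / p, hymem⟩ : zInvP p hp.ne_zero) < d := by
      have : (d : ℚ) / p < (d : ℚ) := div_lt_self hd0Q hp1
      exact_mod_cast this
    exact invp_step_aux h hd hy1 hy2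
  classical
  let f : ℕ → {d : zInvP p hp.ne_zero //
      0 < d ∧ ∀ z, s z d → z = 0 ∨ (0 < z ∧ d + d ≤ z)} := fun n =>
    Nat.rec ⟨hbase.choose, hbase.choose_spec⟩
      (fun _ prev => ⟨(hstep prev.1 prev.2).choose, (hstep prev.1 prev.2).choose_spec.1⟩) n
  have hf : ∀ n, ((f (n + 1)).1 : zInvP p hp.ne_zero) + (f (n + 1)).1 = (f n).1 := by
    intro n
    exact (hstep (f n).1 (f n).2).choose_spec.2
  set q : ℕ → ℚ := fun n => (((f n).1 : zInvP p hp.ne_zero) : ℚ) with hq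
  have hqrec : ∀ n, q (n + 1) + q (n + 1) = q n := by
    intro n
    have := congrArg (fun x : zInvP p hp.ne_zero => (x : ℚ)) (hf n)
    simpa [hq] using this
  have hq0 : 0 < q 0 := by
    have := (f 0).2.1
    exact_mod_cast this
  have hpow : ∀ n, 2 ^ n * q n = q 0 := by
    intro n
    induction n with
    | zero => ring
    | succ m ih =>
      have h2 : 2 * q (m + 1) = q m := by rw [two_mul]; exact hqrec m
      calc 2 ^ (m + 1) * q (m + 1) = 2 ^ m * (2 * q (m + 1)) := by ring
        _ = 2 ^ m * q m := by rw [h2]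
        _ = q 0 := ih
  obtain ⟨a0, k0, h0⟩ := (f 0).1.2
  have ha0 : a0 ≠ 0 := by
    intro hz
    rw [show ((((f 0).1 : zInvP p hp.ne_zero)) : ℚ) = q 0 from rfl, hz] at h0
    rw [h0] at hq0
    norm_num at hq0
  set N := a0.natAbs with hN
  obtain ⟨aN, kN, hNq⟩ := (f N).1.2
  have hqq : (2 : ℚ) ^ N * ((aN : ℚ) / (p : ℚ) ^ kN) = (a0 : ℚ) / (p : ℚ) ^ k0 := by
    have h1 := hpow N
    rw [show q N = (((f N).1 : zInvP p hp.ne_zero) : ℚ) from rfl, hNq] at h1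
    rw [show q 0 = (((f 0).1 : zInvP p hp.ne_zero) : ℚ) from rfl, h0] at h1
    exact h1
  have hint : (a0 : ℤ) * (p : ℤ) ^ kN = 2 ^ N * aN * (p : ℤ) ^ k0 := by
    have hpk : ((p : ℚ)) ^ kN ≠ 0 := pow_ne_zero _ hpQ
    have hpk0 : ((p : ℚ)) ^ k0 ≠ 0 := pow_ne_zero _ hpQ
    field_simp at hqq
    rw [mul_comm (a0 : ℤ)]
    exact_mod_cast hqq.symm
  have hdvd : (2 : ℤ) ^ N ∣ a0 * (p : ℤ) ^ kN := ⟨aN * (p : ℤ) ^ k0, by rw [hint]; ring⟩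
  have hcop : IsCoprime ((2 : ℤ) ^ N) ((p : ℤ) ^ kN) := by
    refine IsCoprime.pow ?_
    rw [Int.isCoprime_iff_gcd_eq_one]
    have hc : Nat.Coprime 2 p := (Nat.coprime_primes Nat.prime_two hp).mpr (by omega)
    exact hc
  have hdvd0 : (2 : ℤ) ^ N ∣ a0 := hcop.dvd_of_dvd_mul_right hdvd
  have hdvdN : (2 : ℕ) ^ N ∣ a0.natAbs := by
    have h2 : ((2 : ℤ) ^ N).natAbs ∣ a0.natAbs := Int.natAbs_dvd_natAbs.mpr hdvd0
    rwa [Int.natAbs_pow] at h2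
  have hle : 2 ^ N ≤ a0.natAbs := Nat.le_of_dvd (Int.natAbs_pos.mpr ha0) hdvdN
  have hlt : a0.natAbs < 2 ^ N := by
    rw [hN]
    exact Nat.lt_two_pow_self
  omega
end
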